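/- arXiv:2306.11913 — 2 statements merged into one kernel-verified Lean document; each statement's English description precedes it below -/
import Mathlib

section
/- Let c, Δ > 0, m ∈ ℕ with m ≥ 2, q ∈ (0,1). For any two inputs x, x′ ∈ [−c, c], the max divergence between the output distributions of the Randomized Quantization Mechanism satisfies D_∞(P_{Q(x)} ‖ P_{Q(x′)}) ≤ log(2(1−q)²(1 + c/Δ)) + m·log(1/(1−q)). -/
/-- The evenly spaced quantization levels `B i = -X + 2iX/(m-1)` on `[-X, X]`. -/
noncomputable def Bgrid (X : ℝ) (m : ℕ) (i : ℕ) : ℝ := -X + 2 * i * X / (m - 1)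

/-- The index `j` such that `x ∈ [B j, B (j+1))`. -/
noncomputable def jIdx (X : ℝ) (m : ℕ) (x : ℝ) : ℕ :=
  ⌊(x + X) * (m - 1) / (2 * X)⌋₊

/-- The output distribution of the Randomized Quantization Mechanism
(Lemma 2 of the paper), parametrized by the bin index `j` with
`x ∈ [B j, B (j+1))`: the probability that the mechanism outputs level `i`. -/
noncomputable def rqmProbJ (X : ℝ) (m : ℕ) (q : ℝ) (j : ℕ) (x : ℝ) (i : ℕ) : ℝ :=
  let B := Bgrid X m
  if i = 0 then
    (1-q)^j * ((1-q)^(m-j-2) * (B (m-1) - x) / (B (m-1) - B i)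
      + ∑ k ∈ Finset.Ico (j+1) (m-1), q * (1-q)^(k-j-1) * (B k - x) / (B k - B i))
  else if i ≤ j then
    q * (1-q)^(j-i) * ((1-q)^(m-j-2) * (B (m-1) - x) / (B (m-1) - B i)
      + ∑ k ∈ Finset.Ico (j+1) (m-1), q * (1-q)^(k-j-1) * (B k - x) / (B k - B i))
  else if i = m - 1 then
    (1-q)^(i-j-1) * ((1-q)^j * (x - B 0) / (B i - B 0)
      + ∑ k ∈ Finset.Icc 1 j, q * (1-q)^(j-k) * (x - B k) / (B i - B k))
  else
    q * (1-q)^(i-j-1) * ((1-q)^j * (x - B 0) / (B i - B 0)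
      + ∑ k ∈ Finset.Icc 1 j, q * (1-q)^(j-k) * (x - B k) / (B i - B k))

/-- The output distribution of the Randomized Quantization Mechanism on
input `x`. -/
noncomputable def rqmProb (X : ℝ) (m : ℕ) (q : ℝ) (x : ℝ) (i : ℕ) : ℝ :=
  rqmProbJ X m q (jIdx X m x) x i

lemma geom_sum_q (q : ℝ) (n : ℕ) : ∑ t ∈ Finset.range n, q * (1-q)^t = 1 - (1-q)^n := by
  induction n with
  | zero => simp
  | succ n ih => rw [Finset.sum_range_succ, ih]; ring

lemma Bgrid_sub (X : ℝ) (m : ℕ) (a b : ℕ) :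
    Bgrid X m a - Bgrid X m b = 2*((a:ℝ) - b)*X/((m:ℝ)-1) := by
  unfold Bgrid; ring

lemma Bgrid_zero (X : ℝ) (m : ℕ) : Bgrid X m 0 = -X := by simp [Bgrid]

lemma hm1R {m : ℕ} (hm : 2 ≤ m) : (0:ℝ) < (m:ℝ) - 1 := by
  have : (2:ℝ) ≤ (m:ℝ) := by exact_mod_cast hm
  linarith

lemma Bgrid_last (X : ℝ) {m : ℕ} (hm : 2 ≤ m) : Bgrid X m (m-1) = X := by
  have h1 : ((m:ℝ) - 1) ≠ 0 := ne_of_gt (hm1R hm)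
  have h2 : ((m-1 : ℕ) : ℝ) = (m:ℝ) - 1 := by
    rw [Nat.cast_sub (by omega)]; norm_num
  unfold Bgrid
  rw [h2]; field_simp; ring

lemma Bgrid_le (X : ℝ) (hX : 0 < X) {m : ℕ} (hm : 2 ≤ m) {a b : ℕ} (h : a ≤ b) :
    Bgrid X m a ≤ Bgrid X m b := by
  have hab : (a:ℝ) ≤ b := by exact_mod_cast h
  have h0 : 0 ≤ 2*((b:ℝ) - a)*X/((m:ℝ)-1) :=
    div_nonneg (by nlinarith) (le_of_lt (hm1R hm))
  have := Bgrid_sub X m b a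
  linarith

lemma Bgrid_lt (X : ℝ) (hX : 0 < X) {m : ℕ} (hm : 2 ≤ m) {a b : ℕ} (h : a < b) :
    Bgrid X m a < Bgrid X m b := by
  have hab : (a:ℝ) + 1 ≤ b := by exact_mod_cast h
  have h0 : 0 < 2*((b:ℝ) - a)*X/((m:ℝ)-1) :=
    div_pos (by nlinarith) (hm1R hm)
  have := Bgrid_sub X m b a
  linarith

lemma Bgrid_ge_neg (X : ℝ) (hX : 0 < X) {m : ℕ} (hm : 2 ≤ m) (i : ℕ) :
    -X ≤ Bgrid X m i := by
  have := Bgrid_le X hX hm (Nat.zero_le i)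
  rwa [Bgrid_zero] at this

lemma Bgrid_le_X (X : ℝ) (hX : 0 < X) {m : ℕ} (hm : 2 ≤ m) {i : ℕ} (hi : i ≤ m-1) :
    Bgrid X m i ≤ X := by
  have := Bgrid_le X hX hm hi
  rwa [Bgrid_last X hm] at this

lemma jIdx_spec (X : ℝ) {m : ℕ} (hm : 2 ≤ m) (x : ℝ) (hX : 0 < X)
    (hx1 : -X < x) (hx2 : x < X) :
    jIdx X m x ≤ m - 2 ∧ Bgrid X m (jIdx X m x) ≤ x ∧ x < Bgrid X m (jIdx X m x + 1) := by
  have hm1 := hm1R hm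
  set t : ℝ := (x + X) * ((m:ℝ) - 1) / (2 * X) with ht
  have htnn : 0 ≤ t := div_nonneg (by nlinarith) (by linarith)
  have hfl : (⌊t⌋₊ : ℝ) ≤ t := Nat.floor_le htnn
  have hlt : t < ⌊t⌋₊ + 1 := Nat.lt_floor_add_one t
  have hjdef : jIdx X m x = ⌊t⌋₊ := rfl
  have htlt : t < (m:ℝ) - 1 := by
    rw [ht, div_lt_iff₀ (by linarith)]
    nlinarith
  refine ⟨?_, ?_, ?_⟩
  · have h1 : (⌊t⌋₊:ℝ) < (m:ℝ) - 1 := lt_of_le_of_lt hfl htlt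
    have h2 : (⌊t⌋₊:ℝ) < ((m-1:ℕ) : ℝ) := by
      rw [Nat.cast_sub (by omega)]; push_cast; linarith
    have : ⌊t⌋₊ < m - 1 := by exact_mod_cast h2
    omega
  · rw [hjdef]
    have h1 : (⌊t⌋₊:ℝ) * (2*X) ≤ (x+X)*((m:ℝ)-1) := by
      rw [ht] at hfl
      exact (le_div_iff₀ (by linarith)).mp hfl
    have h2 : 2*(⌊t⌋₊:ℝ)*X/((m:ℝ)-1) ≤ x + X := by
      rw [div_le_iff₀ hm1]; nlinarith
    unfold Bgrid; linarith
  · rw [hjdef]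
    have h1 : (x+X)*((m:ℝ)-1) < ((⌊t⌋₊:ℝ)+1) * (2*X) := by
      rw [ht] at hlt
      exact (div_lt_iff₀ (by linarith)).mp hlt
    have h2 : x + X < 2*(((⌊t⌋₊+1:ℕ)):ℝ)*X/((m:ℝ)-1) := by
      rw [lt_div_iff₀ hm1]; push_cast; nlinarith
    unfold Bgrid; linarith

lemma left_bracket_bounds (X q : ℝ) {m : ℕ} (hm : 2 ≤ m) (hX : 0 < X)
    (hq0 : 0 < q) (hq1 : q < 1) (x : ℝ) {j i : ℕ} (hj : j ≤ m - 2)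
    (hBj : Bgrid X m j ≤ x) (hBj1 : x < Bgrid X m (j+1)) (hij : i ≤ j) :
    (1-q)^(m-j-2) * ((X - x)/(2*X)) ≤
      (1-q)^(m-j-2) * (Bgrid X m (m-1) - x) / (Bgrid X m (m-1) - Bgrid X m i)
      + ∑ k ∈ Finset.Ico (j+1) (m-1),
          q * (1-q)^(k-j-1) * (Bgrid X m k - x) / (Bgrid X m k - Bgrid X m i) ∧
    (1-q)^(m-j-2) * (Bgrid X m (m-1) - x) / (Bgrid X m (m-1) - Bgrid X m i)
      + ∑ k ∈ Finset.Ico (j+1) (m-1),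
          q * (1-q)^(k-j-1) * (Bgrid X m k - x) / (Bgrid X m k - Bgrid X m i) ≤ 1 := by
  have hq' : (0:ℝ) < 1 - q := by linarith
  have hBix : Bgrid X m i ≤ x := le_trans (Bgrid_le X hX hm hij) hBj
  have hBiX : -X ≤ Bgrid X m i := Bgrid_ge_neg X hX hm i
  have hilt : i < m - 1 := by omega
  have hden : 0 < X - Bgrid X m i := by
    have := Bgrid_lt X hX hm hilt
    rw [Bgrid_last X hm] at this
    linarith
  have hxX : x < X := by
    have := Bgrid_le_X X hX hm (show j+1 ≤ m-1 by omega)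
    linarith
  -- first term
  have hfirst_lb : (1-q)^(m-j-2) * ((X - x)/(2*X)) ≤
      (1-q)^(m-j-2) * (Bgrid X m (m-1) - x) / (Bgrid X m (m-1) - Bgrid X m i) := by
    rw [Bgrid_last X hm, mul_div_assoc]
    have h1 : (X-x)/(2*X) ≤ (X-x)/(X - Bgrid X m i) := by
      apply div_le_div_of_nonneg_left (by linarith) hden (by linarith)
    exact mul_le_mul_of_nonneg_left h1 (by positivity)
  have hfirst_ub : (1-q)^(m-j-2) * (Bgrid X m (m-1) - x) / (Bgrid X m (m-1) - Bgrid X m i)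
      ≤ (1-q)^(m-j-2) := by
    rw [Bgrid_last X hm, mul_div_assoc]
    have h1 : (X-x)/(X - Bgrid X m i) ≤ 1 := by
      rw [div_le_one hden]; linarith
    calc (1-q)^(m-j-2) * ((X-x)/(X - Bgrid X m i)) ≤ (1-q)^(m-j-2) * 1 :=
          mul_le_mul_of_nonneg_left h1 (by positivity)
      _ = (1-q)^(m-j-2) := mul_one _
  -- sum bounds
  have hsum_nn : 0 ≤ ∑ k ∈ Finset.Ico (j+1) (m-1),
      q * (1-q)^(k-j-1) * (Bgrid X m k - x) / (Bgrid X m k - Bgrid X m i) := by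
    apply Finset.sum_nonneg
    intro k hk
    obtain ⟨hk1, hk2⟩ := Finset.mem_Ico.mp hk
    have hBki : 0 < Bgrid X m k - Bgrid X m i := sub_pos.mpr (Bgrid_lt X hX hm (by omega))
    have hBkx : 0 ≤ Bgrid X m k - x := by
      have := Bgrid_le X hX hm hk1
      linarith
    exact div_nonneg (mul_nonneg (by positivity) hBkx) hBki.le
  have hsum_ub : ∑ k ∈ Finset.Ico (j+1) (m-1),
      q * (1-q)^(k-j-1) * (Bgrid X m k - x) / (Bgrid X m k - Bgrid X m i)
      ≤ 1 - (1-q)^(m-2-j) := by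
    calc ∑ k ∈ Finset.Ico (j+1) (m-1),
          q * (1-q)^(k-j-1) * (Bgrid X m k - x) / (Bgrid X m k - Bgrid X m i)
        ≤ ∑ k ∈ Finset.Ico (j+1) (m-1), q * (1-q)^(k-j-1) := by
          apply Finset.sum_le_sum
          intro k hk
          obtain ⟨hk1, hk2⟩ := Finset.mem_Ico.mp hk
          have hBki : 0 < Bgrid X m k - Bgrid X m i := sub_pos.mpr (Bgrid_lt X hX hm (by omega))
          have hfr : (Bgrid X m k - x)/(Bgrid X m k - Bgrid X m i) ≤ 1 := by
            rw [div_le_one hBki]; linarith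
          rw [mul_div_assoc]
          exact mul_le_of_le_one_right (by positivity) hfr
      _ = ∑ t ∈ Finset.range (m-2-j), q * (1-q)^t := by
          rw [Finset.sum_Ico_eq_sum_range]
          have he : m - 1 - (j+1) = m-2-j := by omega
          rw [he]
          apply Finset.sum_congr rfl
          intro t _
          congr 2
          omega
      _ = 1 - (1-q)^(m-2-j) := geom_sum_q q _
  constructor
  · linarith
  · have heq : (1-q)^(m-j-2) = (1-q)^(m-2-j) := by
      congr 1
      omega
    linarith

lemma right_bracket_bounds (X q : ℝ) {m : ℕ} (hm : 2 ≤ m) (hX : 0 < X)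
    (hq0 : 0 < q) (hq1 : q < 1) (x : ℝ) {j i : ℕ} (hj : j ≤ m - 2)
    (hxX : -X < x)
    (hBj : Bgrid X m j ≤ x) (hBj1 : x < Bgrid X m (j+1)) (hij : j + 1 ≤ i) (him : i ≤ m - 1) :
    (1-q)^j * ((x + X)/(2*X)) ≤
      (1-q)^j * (x - Bgrid X m 0) / (Bgrid X m i - Bgrid X m 0)
      + ∑ k ∈ Finset.Icc 1 j,
          q * (1-q)^(j-k) * (x - Bgrid X m k) / (Bgrid X m i - Bgrid X m k) ∧
    (1-q)^j * (x - Bgrid X m 0) / (Bgrid X m i - Bgrid X m 0)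
      + ∑ k ∈ Finset.Icc 1 j,
          q * (1-q)^(j-k) * (x - Bgrid X m k) / (Bgrid X m i - Bgrid X m k) ≤ 1 := by
  have hq' : (0:ℝ) < 1 - q := by linarith
  have hxBi : x < Bgrid X m i := lt_of_lt_of_le hBj1 (Bgrid_le X hX hm hij)
  have hBiub : Bgrid X m i ≤ X := Bgrid_le_X X hX hm him
  have hden : 0 < Bgrid X m i - Bgrid X m 0 := sub_pos.mpr (Bgrid_lt X hX hm (by omega))
  have hfirst_lb : (1-q)^j * ((x + X)/(2*X)) ≤
      (1-q)^j * (x - Bgrid X m 0) / (Bgrid X m i - Bgrid X m 0) := by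
    rw [Bgrid_zero, mul_div_assoc]
    have h1 : (x+X)/(2*X) ≤ (x+X)/(Bgrid X m i - -X) := by
      apply div_le_div_of_nonneg_left (by linarith) (by rw [Bgrid_zero] at hden; exact hden)
        (by linarith)
    have h2 : x - -X = x + X := by ring
    rw [h2]
    exact mul_le_mul_of_nonneg_left h1 (by positivity)
  have hfirst_ub : (1-q)^j * (x - Bgrid X m 0) / (Bgrid X m i - Bgrid X m 0) ≤ (1-q)^j := by
    rw [mul_div_assoc]
    have h1 : (x - Bgrid X m 0)/(Bgrid X m i - Bgrid X m 0) ≤ 1 := by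
      rw [div_le_one hden]; linarith
    calc (1-q)^j * ((x - Bgrid X m 0)/(Bgrid X m i - Bgrid X m 0)) ≤ (1-q)^j * 1 :=
          mul_le_mul_of_nonneg_left h1 (by positivity)
      _ = (1-q)^j := mul_one _
  have hsum_nn : 0 ≤ ∑ k ∈ Finset.Icc 1 j,
      q * (1-q)^(j-k) * (x - Bgrid X m k) / (Bgrid X m i - Bgrid X m k) := by
    apply Finset.sum_nonneg
    intro k hk
    obtain ⟨hk1, hk2⟩ := Finset.mem_Icc.mp hk
    have hBki : 0 < Bgrid X m i - Bgrid X m k := sub_pos.mpr (Bgrid_lt X hX hm (by omega))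
    have hBkx : 0 ≤ x - Bgrid X m k := by
      have := Bgrid_le X hX hm hk2
      linarith
    exact div_nonneg (mul_nonneg (by positivity) hBkx) hBki.le
  have hsum_ub : ∑ k ∈ Finset.Icc 1 j,
      q * (1-q)^(j-k) * (x - Bgrid X m k) / (Bgrid X m i - Bgrid X m k)
      ≤ 1 - (1-q)^j := by
    calc ∑ k ∈ Finset.Icc 1 j,
          q * (1-q)^(j-k) * (x - Bgrid X m k) / (Bgrid X m i - Bgrid X m k)
        ≤ ∑ k ∈ Finset.Icc 1 j, q * (1-q)^(j-k) := by
          apply Finset.sum_le_sum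
          intro k hk
          obtain ⟨hk1, hk2⟩ := Finset.mem_Icc.mp hk
          have hBki : 0 < Bgrid X m i - Bgrid X m k := sub_pos.mpr (Bgrid_lt X hX hm (by omega))
          have hBkx : Bgrid X m k ≤ x := le_trans (Bgrid_le X hX hm hk2) hBj
          have hfr : (x - Bgrid X m k)/(Bgrid X m i - Bgrid X m k) ≤ 1 := by
            rw [div_le_one hBki]; linarith
          rw [mul_div_assoc]
          exact mul_le_of_le_one_right (by positivity) hfr
      _ = ∑ t ∈ Finset.range j, q * (1-q)^(j-1-t) := by
          rw [show Finset.Icc 1 j = Finset.Ico 1 (j+1) from rfl]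
          rw [Finset.sum_Ico_eq_sum_range]
          have he : j + 1 - 1 = j := by omega
          rw [he]
          apply Finset.sum_congr rfl
          intro t _
          congr 2
          omega
      _ = ∑ t ∈ Finset.range j, q * (1-q)^t :=
          Finset.sum_range_reflect (fun t => q * (1-q)^t) j
      _ = 1 - (1-q)^j := geom_sum_q q _
  constructor
  · linarith
  · linarith

lemma rqmProbJ_eq (X : ℝ) (m : ℕ) (q : ℝ) (j : ℕ) (x : ℝ) (i : ℕ) :
    rqmProbJ X m q j x i =
    if i = 0 then
      (1-q)^j * ((1-q)^(m-j-2) * (Bgrid X m (m-1) - x) / (Bgrid X m (m-1) - Bgrid X m i)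
        + ∑ k ∈ Finset.Ico (j+1) (m-1),
            q * (1-q)^(k-j-1) * (Bgrid X m k - x) / (Bgrid X m k - Bgrid X m i))
    else if i ≤ j then
      q * (1-q)^(j-i) * ((1-q)^(m-j-2) * (Bgrid X m (m-1) - x) / (Bgrid X m (m-1) - Bgrid X m i)
        + ∑ k ∈ Finset.Ico (j+1) (m-1),
            q * (1-q)^(k-j-1) * (Bgrid X m k - x) / (Bgrid X m k - Bgrid X m i))
    else if i = m - 1 then
      (1-q)^(i-j-1) * ((1-q)^j * (x - Bgrid X m 0) / (Bgrid X m i - Bgrid X m 0)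
        + ∑ k ∈ Finset.Icc 1 j, q * (1-q)^(j-k) * (x - Bgrid X m k) / (Bgrid X m i - Bgrid X m k))
    else
      q * (1-q)^(i-j-1) * ((1-q)^j * (x - Bgrid X m 0) / (Bgrid X m i - Bgrid X m 0)
        + ∑ k ∈ Finset.Icc 1 j, q * (1-q)^(j-k) * (x - Bgrid X m k) / (Bgrid X m i - Bgrid X m k))
    := rfl

lemma rqm_bounds (X Δ q : ℝ) {m : ℕ} (hm : 2 ≤ m) (hΔ : 0 < Δ) (hq0 : 0 < q) (hq1 : q < 1)
    (x : ℝ) (hx1 : Δ ≤ x + X) (hx2 : Δ ≤ X - x) (i : ℕ) (hi : i < m) :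
    (1-q)^(m-2) * (Δ / (2*X)) * (if i = 0 ∨ i = m-1 then 1 else q) ≤ rqmProb X m q x i ∧
      rqmProb X m q x i ≤ (if i = 0 ∨ i = m-1 then 1 else q) := by
  have hX : 0 < X := by linarith
  have hq' : (0:ℝ) < 1 - q := by linarith
  have hxl : -X < x := by linarith
  have hxr : x < X := by linarith
  obtain ⟨hj2, hBj, hBj1⟩ := jIdx_spec X hm x hX hxl hxr
  set j := jIdx X m x with hjdef
  rw [rqmProb, rqmProbJ_eq, ← hjdef]
  by_cases h0 : i = 0
  · subst h0
    obtain ⟨hlb, hub⟩ := left_bracket_bounds X q hm hX hq0 hq1 x hj2 hBj hBj1 (Nat.zero_le j)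
    have hA0 := le_trans (show (0:ℝ) ≤ (1-q)^(m-j-2) * ((X-x)/(2*X)) from
      mul_nonneg (by positivity) (div_nonneg (by linarith) (by linarith))) hlb
    simp only [if_pos rfl, if_pos (Or.inl rfl)]
    constructor
    · calc (1-q)^(m-2) * (Δ / (2*X)) * 1 = (1-q)^j * ((1-q)^(m-j-2) * (Δ/(2*X))) := by
                    rw [mul_one, ← mul_assoc, ← pow_add]
                    congr 2
                    omega
        _ ≤ (1-q)^j * ((1-q)^(m-j-2) * ((X-x)/(2*X))) := by gcongr <;> linarith
        _ ≤ _ := mul_le_mul_of_nonneg_left hlb (by positivity)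
    · calc (1-q)^j * _ ≤ 1 * 1 :=
                    mul_le_mul (pow_le_one₀ (by linarith) (by linarith)) hub hA0 zero_le_one
        _ = 1 := mul_one 1
  · by_cases hij : i ≤ j
    · have hifac : ¬ (i = 0 ∨ i = m-1) := by
        rintro (h | h)
        · exact h0 h
        · omega
      obtain ⟨hlb, hub⟩ := left_bracket_bounds X q hm hX hq0 hq1 x hj2 hBj hBj1 hij
      have hA0 := le_trans (show (0:ℝ) ≤ (1-q)^(m-j-2) * ((X-x)/(2*X)) from
        mul_nonneg (by positivity) (div_nonneg (by linarith) (by linarith))) hlb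
      simp only [if_neg h0, if_pos hij, if_neg hifac]
      constructor
      · calc (1-q)^(m-2) * (Δ / (2*X)) * q ≤ (1-q)^(m-2-i) * ((X-x)/(2*X)) * q := by
                    apply mul_le_mul_of_nonneg_right _ hq0.le
                    apply mul_le_mul (pow_le_pow_of_le_one (by linarith) (by linarith) (by omega))
                      (by gcongr <;> linarith) (div_nonneg (by linarith) (by linarith)) (by positivity)
          _ = q * (1-q)^(j-i) * ((1-q)^(m-j-2) * ((X-x)/(2*X))) := by
                    rw [show q * (1-q)^(j-i) * ((1-q)^(m-j-2) * ((X-x)/(2*X)))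
                          = (1-q)^(j-i) * (1-q)^(m-j-2) * ((X-x)/(2*X)) * q by ring, ← pow_add]
                    rw [show j - i + (m-j-2) = m-2-i by omega]
          _ ≤ q * (1-q)^(j-i) * _ := mul_le_mul_of_nonneg_left hlb (by positivity)
      · calc q * (1-q)^(j-i) * _ ≤ (q * 1) * 1 := by
                    refine mul_le_mul ?_ hub hA0 (by positivity)
                    rw [mul_one]
                    exact mul_le_of_le_one_right hq0.le (pow_le_one₀ (by linarith) (by linarith))
          _ = q := by ring
    · push_neg at hij
      have hij' : j + 1 ≤ i := hij
      have him : i ≤ m - 1 := by omega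
      obtain ⟨hlb, hub⟩ := right_bracket_bounds X q hm hX hq0 hq1 x hj2 hxl hBj hBj1 hij' him
      have hA0 := le_trans (show (0:ℝ) ≤ (1-q)^j * ((x+X)/(2*X)) from
        mul_nonneg (by positivity) (div_nonneg (by linarith) (by linarith))) hlb
      by_cases hlast : i = m - 1
      · simp only [if_neg h0, if_neg (by omega : ¬ i ≤ j), if_pos hlast,
          if_pos (Or.inr hlast)]
        constructor
        · calc (1-q)^(m-2) * (Δ / (2*X)) * 1 = (1-q)^(i-j-1) * ((1-q)^j * (Δ/(2*X))) := by
                      rw [mul_one, ← mul_assoc, ← pow_add]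
                      congr 2
                      omega
            _ ≤ (1-q)^(i-j-1) * ((1-q)^j * ((x+X)/(2*X))) := by gcongr <;> linarith
            _ ≤ _ := mul_le_mul_of_nonneg_left hlb (by positivity)
        · calc (1-q)^(i-j-1) * _ ≤ 1 * 1 :=
                      mul_le_mul (pow_le_one₀ (by linarith) (by linarith)) hub hA0 zero_le_one
            _ = 1 := mul_one 1
      · have hifac : ¬ (i = 0 ∨ i = m-1) := by
          rintro (h | h)
          · exact h0 h
          · exact hlast h
        simp only [if_neg h0, if_neg (by omega : ¬ i ≤ j), if_neg hlast, if_neg hifac]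
        constructor
        · calc (1-q)^(m-2) * (Δ / (2*X)) * q ≤ (1-q)^(i-1) * ((x+X)/(2*X)) * q := by
                      apply mul_le_mul_of_nonneg_right _ hq0.le
                      apply mul_le_mul (pow_le_pow_of_le_one (by linarith) (by linarith) (by omega))
                        (by gcongr <;> linarith) (div_nonneg (by linarith) (by linarith)) (by positivity)
            _ = q * (1-q)^(i-j-1) * ((1-q)^j * ((x+X)/(2*X))) := by
                      rw [show q * (1-q)^(i-j-1) * ((1-q)^j * ((x+X)/(2*X)))
                            = (1-q)^(i-j-1) * (1-q)^j * ((x+X)/(2*X)) * q by ring, ← pow_add]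
                      rw [show i - j - 1 + j = i-1 by omega]
            _ ≤ q * (1-q)^(i-j-1) * _ := mul_le_mul_of_nonneg_left hlb (by positivity)
        · calc q * (1-q)^(i-j-1) * _ ≤ (q * 1) * 1 := by
                      refine mul_le_mul ?_ hub hA0 (by positivity)
                      rw [mul_one]
                      exact mul_le_of_le_one_right hq0.le (pow_le_one₀ (by linarith) (by linarith))
            _ = q := by ring

/-- Max-divergence bound for the Randomized Quantization Mechanism
(Theorem 1 of the paper): for any inputs `x, x' ∈ [-c,c]`,
`D_∞(P_{Q(x)} ‖ P_{Q(x')}) ≤ log(2(1-q)²(1+c/Δ)) + m·log(1/(1-q))`. -/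
theorem rqm_max_divergence_bound (c Δ : ℝ) (hc : 0 < c) (hΔ : 0 < Δ)
    (m : ℕ) (hm : 2 ≤ m) (q : ℝ) (hq : q ∈ Set.Ioo (0:ℝ) 1)
    (x x' : ℝ) (hx : x ∈ Set.Icc (-c) c) (hx' : x' ∈ Set.Icc (-c) c) :
    Real.log ((Finset.range m).sup' (Finset.nonempty_range_iff.mpr (by omega))
        (fun i => rqmProb (c+Δ) m q x i / rqmProb (c+Δ) m q x' i)) ≤
      Real.log (2 * (1-q)^2 * (1 + c/Δ)) + m * Real.log (1/(1-q)) := by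
  obtain ⟨hq0, hq1⟩ := hq
  obtain ⟨hxa, hxb⟩ := hx
  obtain ⟨hxa', hxb'⟩ := hx'
  have hq' : (0:ℝ) < 1 - q := by linarith
  have ha : (1:ℝ) - q ≠ 0 := ne_of_gt hq'
  set X := c + Δ with hXdef
  have hX : 0 < X := by rw [hXdef]; linarith
  set K := 2*X/(Δ*(1-q)^(m-2)) with hK
  have hbd : ∀ i ∈ Finset.range m, rqmProb X m q x i / rqmProb X m q x' i ≤ K := by
    intro i hi
    rw [Finset.mem_range] at hi
    obtain ⟨hl, hu⟩ := rqm_bounds X Δ q hm hΔ hq0 hq1 x (by rw [hXdef]; linarith)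
      (by rw [hXdef]; linarith) i hi
    obtain ⟨hl', hu'⟩ := rqm_bounds X Δ q hm hΔ hq0 hq1 x' (by rw [hXdef]; linarith)
      (by rw [hXdef]; linarith) i hi
    set u : ℝ := if i = 0 ∨ i = m-1 then 1 else q with hu0
    have hupos : 0 < u := by
      rw [hu0]
      split_ifs
      · norm_num
      · exact hq0
    have hLpos : 0 < (1-q)^(m-2) * (Δ/(2*X)) * u :=
      mul_pos (mul_pos (pow_pos hq' _) (div_pos hΔ (by linarith))) hupos
    have h1 : rqmProb X m q x i / rqmProb X m q x' i ≤ u / ((1-q)^(m-2) * (Δ/(2*X)) * u) :=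
      div_le_div₀ (le_of_lt hupos) hu hLpos hl'
    have h2 : u / ((1-q)^(m-2) * (Δ/(2*X)) * u) = K := by
      rw [hK]
      field_simp
    rwa [h2] at h1
  have hsup_le : (Finset.range m).sup' (Finset.nonempty_range_iff.mpr (by omega))
      (fun i => rqmProb X m q x i / rqmProb X m q x' i) ≤ K :=
    Finset.sup'_le _ _ hbd
  have h0mem : 0 ∈ Finset.range m := Finset.mem_range.mpr (by omega)
  have h0pos : 0 < rqmProb X m q x 0 / rqmProb X m q x' 0 := by
    have hl := (rqm_bounds X Δ q hm hΔ hq0 hq1 x (by rw [hXdef]; linarith)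
      (by rw [hXdef]; linarith) 0 (by omega)).1
    have hl' := (rqm_bounds X Δ q hm hΔ hq0 hq1 x' (by rw [hXdef]; linarith)
      (by rw [hXdef]; linarith) 0 (by omega)).1
    rw [if_pos (Or.inl rfl)] at hl hl'
    have hLpos : 0 < (1-q)^(m-2) * (Δ/(2*X)) * 1 :=
      mul_pos (mul_pos (pow_pos hq' _) (div_pos hΔ (by linarith))) one_pos
    exact div_pos (lt_of_lt_of_le hLpos hl) (lt_of_lt_of_le hLpos hl')
  have hsup_pos : 0 < (Finset.range m).sup' (Finset.nonempty_range_iff.mpr (by omega))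
      (fun i => rqmProb X m q x i / rqmProb X m q x' i) :=
    lt_of_lt_of_le h0pos (Finset.le_sup' (fun i => rqmProb X m q x i / rqmProb X m q x' i) h0mem)
  have hlog := Real.log_le_log hsup_pos hsup_le
  refine le_trans hlog ?_
  have hpow : (1-q)^m = (1-q)^(m-2) * (1-q)^2 := by
    rw [← pow_add]
    congr 1
    omega
  have hKeq : K = 2 * (1-q)^2 * (1 + c/Δ) * (1/(1-q))^m := by
    rw [hK, hXdef, div_pow, one_pow, hpow]
    field_simp
    ring
  rw [← Real.log_pow, ← Real.log_mul (by positivity) (by positivity), hKeq]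
end

section
/- Let q ∈ (0,1), m ≥ 2, and 0 ≤ j ≤ m−2. For a fixed input x with B(j) ≤ x < B(j+1), the probabilities Pr(Q(x)=i) given by the RQM output formula are nonnegative for all i ∈ {0,...,m−1} and sum to 1. -/
/-!
The mechanism picks a lower level `i ≤ j` and an upper level `k ≥ j + 1` independently, each at a
geometric distance from the bin of `x` truncated at the end of the grid, and then rounds `x` to
`B i` with probability `(B k - x) / (B k - B i)` and to `B k` with probability
`(x - B i) / (B k - B i)`. The formula of Lemma 2 is the resulting marginal of the output, so it is
a mixture of two-point distributions: each term is nonnegative, and summing the two rounding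
probabilities of each pair `(i, k)` leaves the product of the total weights, `1 * 1`.
-/

open Finset

/-- The law of `min G n` for a geometric variable `G` with success probability `q`. -/
noncomputable def truncGeom (q : ℝ) (n t : ℕ) : ℝ :=
  if t = n then (1 - q) ^ n else q * (1 - q) ^ t

section truncGeom

lemma sum_truncGeom (q : ℝ) (n : ℕ) : ∑ t ∈ range (n + 1), truncGeom q n t = 1 := by
  have hgeom := mul_neg_geom_sum (1 - q) n
  rw [sub_sub_cancel] at hgeom
  rw [sum_range_succ, sum_congr rfl fun t ht => by rw [truncGeom, if_neg (mem_range.1 ht).ne],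
    ← mul_sum, hgeom, truncGeom, if_pos rfl]
  ring

lemma sum_range_truncGeom_sub (q : ℝ) (j : ℕ) :
    ∑ i ∈ range (j + 1), truncGeom q j (j - i) = 1 := by
  have hreflect := sum_range_reflect (truncGeom q j) (j + 1)
  rw [Nat.add_sub_cancel] at hreflect
  rw [hreflect, sum_truncGeom]

lemma sum_Ico_truncGeom_sub (q : ℝ) {m j : ℕ} (hjm : j + 2 ≤ m) :
    ∑ k ∈ Ico (j + 1) m, truncGeom q (m - j - 2) (k - j - 1) = 1 := by
  rw [sum_Ico_eq_sum_range, show m - (j + 1) = m - j - 2 + 1 by omega, ← sum_truncGeom q]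
  exact sum_congr rfl fun t _ => by rw [show j + 1 + t - j - 1 = t by omega]

variable {q : ℝ} {m j : ℕ}

lemma truncGeom_nonneg (hq : q ∈ Set.Icc (0 : ℝ) 1) (n t : ℕ) : 0 ≤ truncGeom q n t := by
  have : 0 ≤ 1 - q := sub_nonneg.2 hq.2
  have := hq.1
  unfold truncGeom
  split <;> positivity

lemma sum_range_truncGeom_sub_mul (f : ℕ → ℝ) :
    ∑ k ∈ range (j + 1), truncGeom q j (j - k) * f k
      = (1 - q) ^ j * f 0 + ∑ k ∈ Icc 1 j, q * (1 - q) ^ (j - k) * f k := by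
  rw [range_eq_Ico, sum_eq_sum_Ico_succ_bot (by omega), zero_add, Ico_add_one_right_eq_Icc,
    truncGeom, if_pos (Nat.sub_zero j)]
  congr 1
  refine sum_congr rfl fun k hk => ?_
  rw [truncGeom, if_neg (by grind)]

lemma sum_Ico_truncGeom_sub_mul (hjm : j + 2 ≤ m) (f : ℕ → ℝ) :
    ∑ k ∈ Ico (j + 1) m, truncGeom q (m - j - 2) (k - j - 1) * f k
      = (1 - q) ^ (m - j - 2) * f (m - 1)
        + ∑ k ∈ Ico (j + 1) (m - 1), q * (1 - q) ^ (k - j - 1) * f k := by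
  obtain ⟨n, rfl⟩ : ∃ n, m = n + 1 := ⟨m - 1, by omega⟩
  rw [Nat.add_sub_cancel, sum_Ico_succ_top (by omega), truncGeom, if_pos (by omega), add_comm]
  congr 1
  refine sum_congr rfl fun k hk => ?_
  rw [truncGeom, if_neg (by grind)]

end truncGeom

lemma sum_roundDown_add_sum_roundUp {ι : Type*} (s t : Finset ι) (w v B : ι → ℝ) (x : ℝ)
    (hB : ∀ i ∈ s, ∀ k ∈ t, B i ≠ B k) :
    ∑ i ∈ s, ∑ k ∈ t, w i * v k * ((B k - x) / (B k - B i))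
        + ∑ k ∈ t, ∑ i ∈ s, v k * w i * ((x - B i) / (B k - B i))
      = (∑ i ∈ s, w i) * ∑ k ∈ t, v k := by
  conv_lhs => enter [2]; rw [sum_comm]
  rw [← sum_add_distrib, sum_mul_sum]
  refine sum_congr rfl fun i hi => ?_
  rw [← sum_add_distrib]
  refine sum_congr rfl fun k hk => ?_
  have := sub_ne_zero.2 (hB i hi k hk).symm
  field_simp
  ring

lemma Bgrid_strictMono {X : ℝ} (hX : 0 < X) {m : ℕ} (hm : 1 < m) : StrictMono (Bgrid X m) := by
  intro i k hik
  have hm' : (0 : ℝ) < m - 1 := by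
    rw [sub_pos]
    exact_mod_cast hm
  have hik' : (i : ℝ) < k := by exact_mod_cast hik
  unfold Bgrid
  gcongr

section rqmProbJ

variable {X : ℝ} {m : ℕ} {q : ℝ} {j : ℕ} {x : ℝ} {i : ℕ}

lemma rqmProbJ_of_le (hjm : j + 2 ≤ m) (hi : i ≤ j) :
    rqmProbJ X m q j x i = ∑ k ∈ Ico (j + 1) m, truncGeom q j (j - i)
      * truncGeom q (m - j - 2) (k - j - 1) * ((Bgrid X m k - x) / (Bgrid X m k - Bgrid X m i)) := by
  simp only [mul_assoc]
  rw [← mul_sum, sum_Ico_truncGeom_sub_mul hjm, truncGeom]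
  simp only [rqmProbJ, mul_div_assoc]
  by_cases h0 : i = 0
  · rw [if_pos h0, if_pos (by omega)]
  · rw [if_neg h0, if_pos hi, if_neg (by omega)]

lemma rqmProbJ_of_lt (hjm : j + 2 ≤ m) (hji : j < i) (him : i < m) :
    rqmProbJ X m q j x i = ∑ k ∈ range (j + 1), truncGeom q (m - j - 2) (i - j - 1)
      * truncGeom q j (j - k) * ((x - Bgrid X m k) / (Bgrid X m i - Bgrid X m k)) := by
  simp only [mul_assoc]
  rw [← mul_sum, sum_range_truncGeom_sub_mul, truncGeom]
  simp only [rqmProbJ, mul_div_assoc]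
  rw [if_neg (by omega), if_neg (by omega)]
  by_cases htop : i = m - 1
  · rw [if_pos htop, if_pos (by omega), show m - j - 2 = i - j - 1 by omega]
  · rw [if_neg htop, if_neg (by omega)]

lemma rqmProbJ_nonneg (hX : 0 < X) (hq : q ∈ Set.Icc (0 : ℝ) 1) (hjm : j + 2 ≤ m)
    (hx : Bgrid X m j ≤ x ∧ x < Bgrid X m (j + 1)) (him : i < m) :
    0 ≤ rqmProbJ X m q j x i := by
  have hB := Bgrid_strictMono hX (by omega : 1 < m)
  rcases le_or_gt i j with hij | hji
  · rw [rqmProbJ_of_le hjm hij]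
    refine sum_nonneg fun k hk => ?_
    have hk := (mem_Ico.1 hk).1
    have hxk : x < Bgrid X m k := hx.2.trans_le (hB.monotone hk)
    have hik : Bgrid X m i < Bgrid X m k := hB (by omega)
    have := truncGeom_nonneg hq j (j - i)
    have := truncGeom_nonneg hq (m - j - 2) (k - j - 1)
    exact mul_nonneg (by positivity) (div_nonneg (by linarith) (by linarith))
  · rw [rqmProbJ_of_lt hjm hji him]
    refine sum_nonneg fun k hk => ?_
    have hk := Nat.lt_succ_iff.1 (mem_range.1 hk)
    have hkx : Bgrid X m k ≤ x := (hB.monotone hk).trans hx.1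
    have hki : Bgrid X m k < Bgrid X m i := hB (by omega)
    have := truncGeom_nonneg hq (m - j - 2) (i - j - 1)
    have := truncGeom_nonneg hq j (j - k)
    exact mul_nonneg (by positivity) (div_nonneg (by linarith) (by linarith))

lemma sum_range_rqmProbJ (hX : 0 < X) (hjm : j + 2 ≤ m) :
    ∑ i ∈ range m, rqmProbJ X m q j x i = 1 := by
  have hB := Bgrid_strictMono hX (by omega : 1 < m)
  rw [← sum_range_add_sum_Ico _ (by omega : j + 1 ≤ m),
    sum_congr rfl fun i hi => rqmProbJ_of_le hjm (Nat.lt_succ_iff.1 (mem_range.1 hi)),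
    sum_congr rfl fun i hi => rqmProbJ_of_lt hjm (mem_Ico.1 hi).1 (mem_Ico.1 hi).2,
    sum_roundDown_add_sum_roundUp, sum_range_truncGeom_sub, sum_Ico_truncGeom_sub q hjm, one_mul]
  intro i hi k hk
  exact (hB (by grind)).ne

end rqmProbJ

/-- The RQM output probabilities are nonnegative and sum to one. -/
theorem rqm_prob_is_distribution (X : ℝ) (hX : 0 < X)
    (m : ℕ) (hm : 2 ≤ m) (q : ℝ) (hq : q ∈ Set.Ioo (0:ℝ) 1)
    (j : ℕ) (hj : j ≤ m - 2) (x : ℝ)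
    (hx : Bgrid X m j ≤ x ∧ x < Bgrid X m (j+1)) :
    (∀ i < m, 0 ≤ rqmProbJ X m q j x i) ∧
      ∑ i ∈ Finset.range m, rqmProbJ X m q j x i = 1 := by
  have hjm : j + 2 ≤ m := by omega
  exact ⟨fun i him => rqmProbJ_nonneg hX (Set.Ioo_subset_Icc_self hq) hjm hx him,
    sum_range_rqmProbJ hX hjm⟩
end
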